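/- arXiv:2102.06307 — 6 statements merged into one kernel-verified Lean document; each statement's English description precedes it below -/
import Mathlib

section
/- With ψ and α_p as above, for all 0 ≤ p ≤ d−1, α_p − α_{p+1} = 2^{−d} ∑_{s=0}^{d} binom(d−p−1, s−1) ψ(s/d), and consequently exp(−1/(2ν²))/2^{p+1} ≤ α_p − α_{p+1} ≤ 1/2^{p+1}. -/
/-! By Pascal's rule the difference `α p - α (p + 1)` is `2⁻ᵈ` times a combination of the values
`ψ (s / d)` with nonnegative coefficients `binom(d-p-1, s-1)` summing to `2^(d-p-1)`. Since
`0 ≤ 1 - √(1 - t) ≤ 1` for `t ≥ 0`, every such value lies in `[exp (-1/(2ν²)), 1]`. -/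

open Finset Real

theorem Nat.cast_choose_succ_sub_cast_choose {R : Type*} [AddGroupWithOne R] (n s : ℕ) :
    ((n + 1).choose s : R) - n.choose s = if s = 0 then 0 else (n.choose (s - 1) : R) := by
  rcases s with _ | s
  · simp
  · simp [Nat.choose_succ_succ']

theorem Nat.sum_range_choose_of_lt {n N : ℕ} (h : n < N) :
    ∑ s ∈ range N, n.choose s = 2 ^ n := by
  rw [← Nat.sum_range_choose n]
  refine (sum_subset (range_subset_range.mpr h) fun s _ hs => ?_).symm
  exact Nat.choose_eq_zero_of_lt (by simpa using hs)

theorem sum_choose_succ_mul_sub_sum_choose_mul {R : Type*} [Ring R] (n N : ℕ) (w : ℕ → R) :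
    ∑ s ∈ range N, ((n + 1).choose s : R) * w s - ∑ s ∈ range N, (n.choose s : R) * w s =
      ∑ s ∈ range N, (if s = 0 then 0 else (n.choose (s - 1) : R)) * w s := by
  simp only [← sum_sub_distrib, ← sub_mul, Nat.cast_choose_succ_sub_cast_choose]

theorem sum_shifted_choose {R : Type*} [Ring R] {n N : ℕ} (h : n + 1 < N) :
    ∑ s ∈ range N, (if s = 0 then 0 else (n.choose (s - 1) : R)) = 2 ^ n := by
  have := sum_choose_succ_mul_sub_sum_choose_mul n N (fun _ => (1 : R))
  simp only [mul_one, ← Nat.cast_sum, Nat.sum_range_choose_of_lt h,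
    Nat.sum_range_choose_of_lt (n.lt_succ_self.trans h)] at this
  rw [← this, Nat.cast_pow, Nat.cast_pow, Nat.cast_ofNat, pow_succ, mul_two, add_sub_cancel_right]

theorem sum_shifted_choose_mul_mem_Icc {n N : ℕ} (h : n + 1 < N) {w : ℕ → ℝ} {a b : ℝ}
    (hw : ∀ s < N, w s ∈ Set.Icc a b) :
    ∑ s ∈ range N, (if s = 0 then 0 else (n.choose (s - 1) : ℝ)) * w s ∈
      Set.Icc (a * 2 ^ n) (b * 2 ^ n) := by
  have hc : ∀ s, (0 : ℝ) ≤ if s = 0 then 0 else (n.choose (s - 1) : ℝ) := by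
    intro s; split_ifs <;> positivity
  rw [← sum_shifted_choose h, mul_sum, mul_sum]
  constructor <;> refine sum_le_sum fun s hs => ?_ <;> rw [mul_comm]
  · exact mul_le_mul_of_nonneg_left (hw s (mem_range.mp hs)).1 (hc s)
  · exact mul_le_mul_of_nonneg_right (hw s (mem_range.mp hs)).2 (hc s)

theorem exp_neg_sq_one_sub_sqrt_div_mem_Icc (ν : ℝ) {t : ℝ} (ht : 0 ≤ t) :
    exp (-(1 - √(1 - t)) ^ 2 / (2 * ν ^ 2)) ∈ Set.Icc (exp (-1 / (2 * ν ^ 2))) 1 := by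
  have hsqrt : √(1 - t) ≤ 1 := sqrt_le_one.mpr (by linarith)
  have hsq : (1 - √(1 - t)) ^ 2 ≤ 1 := by nlinarith [sqrt_nonneg (1 - t)]
  refine ⟨exp_le_exp.mpr ?_, exp_le_one_iff.mpr ?_⟩
  · exact div_le_div_of_nonneg_right (by linarith) (by positivity)
  · exact div_nonpos_of_nonpos_of_nonneg (by nlinarith) (by positivity)

theorem stmt7_general (d p : ℕ) (hd : 2 ≤ d) (hp : p ≤ d - 1) (ν : ℝ)
    (ψ : ℝ → ℝ)
    (hψ : ∀ t, ψ t = Real.exp (-(1 - Real.sqrt (1 - t)) ^ 2 / (2 * ν ^ 2)))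
    (α : ℕ → ℝ)
    (hα : ∀ p, α p = (1 / 2 ^ d) *
      ∑ s ∈ Finset.range (d + 1), (Nat.choose (d - p) s : ℝ) * ψ ((s : ℝ) / d)) :
    α p - α (p + 1) = (1 / 2 ^ d) *
        ∑ s ∈ Finset.range (d + 1),
          (if s = 0 then 0 else (Nat.choose (d - p - 1) (s - 1) : ℝ)) * ψ ((s : ℝ) / d)
      ∧ Real.exp (-1 / (2 * ν ^ 2)) / 2 ^ (p + 1) ≤ α p - α (p + 1)
      ∧ α p - α (p + 1) ≤ 1 / 2 ^ (p + 1) := by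
  set m := d - p - 1
  have hdiff : α p - α (p + 1) = (1 / 2 ^ d) * ∑ s ∈ range (d + 1),
      (if s = 0 then 0 else (m.choose (s - 1) : ℝ)) * ψ ((s : ℝ) / d) := by
    rw [hα, hα, ← mul_sub, show d - p = m + 1 by omega, show d - (p + 1) = m by omega,
      sum_choose_succ_mul_sub_sum_choose_mul]
  obtain ⟨hlo, hhi⟩ := sum_shifted_choose_mul_mem_Icc (show m + 1 < d + 1 by omega)
    fun s _ => hψ _ ▸ exp_neg_sq_one_sub_sqrt_div_mem_Icc ν (t := (s : ℝ) / d) (by positivity)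
  have hpow : (2 : ℝ) ^ d = 2 ^ (p + 1) * 2 ^ m := by rw [← pow_add]; congr 1; omega
  refine ⟨hdiff, ?_, ?_⟩ <;> rw [hdiff]
  · calc exp (-1 / (2 * ν ^ 2)) / 2 ^ (p + 1)
        = 1 / 2 ^ d * (exp (-1 / (2 * ν ^ 2)) * 2 ^ m) := by rw [hpow]; field_simp
      _ ≤ _ := by gcongr
  · calc _ ≤ (1 : ℝ) / 2 ^ d * (1 * 2 ^ m) := by gcongr
      _ = 1 / 2 ^ (p + 1) := by rw [hpow]; field_simp

theorem stmt7 (d p : ℕ) (hd : 2 ≤ d) (hp : p ≤ d - 1) (ν : ℝ) (hν : 0 < ν)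
    (ψ : ℝ → ℝ)
    (hψ : ∀ t, ψ t = Real.exp (-(1 - Real.sqrt (1 - t)) ^ 2 / (2 * ν ^ 2)))
    (α : ℕ → ℝ)
    (hα : ∀ p, α p = (1 / 2 ^ d) *
      ∑ s ∈ Finset.range (d + 1), (Nat.choose (d - p) s : ℝ) * ψ ((s : ℝ) / d)) :
    α p - α (p + 1) = (1 / 2 ^ d) *
        ∑ s ∈ Finset.range (d + 1),
          (if s = 0 then 0 else (Nat.choose (d - p - 1) (s - 1) : ℝ)) * ψ ((s : ℝ) / d)
      ∧ Real.exp (-1 / (2 * ν ^ 2)) / 2 ^ (p + 1) ≤ α p - α (p + 1)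
      ∧ α p - α (p + 1) ≤ 1 / 2 ^ (p + 1) :=
  stmt7_general d p hd hp ν ψ hψ α hα
end

section
/- With α_p as above, define c_d = (d−1)α₀α₂ − dα₁² + α₀α₁. Then c_d = (1/(d·4^d)) ∑_{0 ≤ s < t ≤ d} binom(d,s) binom(d,t) (s−t)² ψ(s/d) ψ(t/d). -/
open Finset

/-!
Write `g s = (d choose s) ψ (s / d)` and `x s = d - s`. The identities
`(d - s) (d choose s) = d (d - 1 choose s)` and
`(d - s) (d - s - 1) (d choose s) = d (d - 1) (d - 2 choose s)` express `α₀, α₁, α₂` through the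
moments `Mₖ = ∑ xₛᵏ gₛ`, namely `2ᵈ α₀ = M₀`, `d 2ᵈ α₁ = M₁` and `d (d - 1) 2ᵈ α₂ = M₂ - M₁`,
so that `d 4ᵈ c_d = M₀ M₂ - M₁²`. Lagrange's identity writes this variance-type expression as
`∑_{s < t} gₛ g_t (xₛ - x_t)²`.
-/

theorem Nat.sub_mul_choose (n s : ℕ) : (n - s) * n.choose s = n * (n - 1).choose s := by
  rcases n with _ | m
  · simp
  · rw [mul_comm, ← Nat.choose_mul_succ_eq, mul_comm, Nat.add_sub_cancel]

section CommRing

variable {R : Type*} [CommRing R]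

theorem Nat.cast_sub_mul_choose (n s : ℕ) :
    ((n : R) - s) * n.choose s = n * (n - 1).choose s := by
  rcases le_or_gt s n with h | h
  · exact_mod_cast congrArg (Nat.cast : ℕ → R) (Nat.sub_mul_choose n s)
  · simp [Nat.choose_eq_zero_of_lt h, Nat.choose_eq_zero_of_lt (by omega : n - 1 < s)]

theorem Nat.cast_sub_mul_cast_sub_one_mul_choose (n s : ℕ) :
    ((n : R) - s) * ((n : R) - s - 1) * n.choose s = n * (n - 1) * (n - 2).choose s := by
  rcases n with _ | m
  · cases s <;> simp
  · have h1 := Nat.cast_sub_mul_choose (R := R) (m + 1) s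
    have h2 := Nat.cast_sub_mul_choose (R := R) m s
    rw [show m + 1 - 2 = m - 1 by omega]
    simp only [Nat.add_sub_cancel, Nat.cast_add, Nat.cast_one] at h1 ⊢
    linear_combination ((m : R) - s) * h1 + ((m : R) + 1) * h2

theorem Finset.sum_cast_sub_mul_choose_mul (S : Finset ℕ) (n : ℕ) (f : ℕ → R) :
    ∑ s ∈ S, ((n : R) - s) * n.choose s * f s = n * ∑ s ∈ S, ((n - 1).choose s : R) * f s := by
  rw [mul_sum]
  refine sum_congr rfl fun s _ => ?_
  rw [Nat.cast_sub_mul_choose, mul_assoc]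

theorem Finset.sum_cast_sub_mul_cast_sub_one_mul_choose_mul (S : Finset ℕ) (n : ℕ) (f : ℕ → R) :
    ∑ s ∈ S, ((n : R) - s) * ((n : R) - s - 1) * n.choose s * f s
      = n * (n - 1) * ∑ s ∈ S, ((n - 2).choose s : R) * f s := by
  rw [mul_sum]
  refine sum_congr rfl fun s _ => ?_
  rw [Nat.cast_sub_mul_cast_sub_one_mul_choose, mul_assoc]

theorem Finset.two_mul_sum_mul_sum_sq_sub_sq_sum {ι : Type*} (S : Finset ι) (g x : ι → R) :
    2 * ((∑ s ∈ S, g s) * (∑ s ∈ S, x s ^ 2 * g s) - (∑ s ∈ S, x s * g s) ^ 2)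
      = ∑ s ∈ S, ∑ t ∈ S, g s * g t * (x s - x t) ^ 2 := by
  have expand : ∀ s t, g s * g t * (x s - x t) ^ 2
      = x s ^ 2 * g s * g t + g s * (x t ^ 2 * g t) - 2 * (x s * g s * (x t * g t)) := by
    intro s t; ring
  simp_rw [expand, sum_sub_distrib, sum_add_distrib, ← mul_sum, ← sum_mul]
  ring

end CommRing

theorem Finset.sum_sum_eq_two_mul_sum_sum_filter_lt {ι R : Type*} [LinearOrder ι] [Semiring R]
    (S : Finset ι) (F : ι → ι → R) (hsymm : ∀ s t, F s t = F t s) (hdiag : ∀ s, F s s = 0) :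
    ∑ s ∈ S, ∑ t ∈ S, F s t = 2 * ∑ s ∈ S, ∑ t ∈ S with s < t, F s t := by
  have split : ∀ s t, F s t = (if s < t then F s t else 0) + (if t < s then F t s else 0) := by
    intro s t
    rcases lt_trichotomy s t with h | rfl | h
    · simp [h, h.not_gt]
    · simp [hdiag]
    · simp [h, h.not_gt, hsymm s t]
  simp_rw [sum_filter]
  calc ∑ s ∈ S, ∑ t ∈ S, F s t
      = ∑ s ∈ S, ∑ t ∈ S, (if s < t then F s t else 0)
          + ∑ s ∈ S, ∑ t ∈ S, (if t < s then F t s else 0) := by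
        simp_rw [← sum_add_distrib, ← split]
    _ = 2 * ∑ s ∈ S, ∑ t ∈ S, if s < t then F s t else 0 := by
        rw [sum_comm (f := fun s t => if t < s then F t s else 0), two_mul]

theorem stmt8_general (d : ℕ) (hd : 2 ≤ d)
    (ψ : ℝ → ℝ)
    (α : ℕ → ℝ)
    (hα : ∀ p, α p = (1 / 2 ^ d) *
      ∑ s ∈ Finset.range (d + 1), (Nat.choose (d - p) s : ℝ) * ψ ((s : ℝ) / d))
    (c : ℝ) (hc : c = (d - 1) * α 0 * α 2 - d * α 1 ^ 2 + α 0 * α 1) :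
    c = (1 / (d * 4 ^ d)) *
      ∑ s ∈ Finset.range (d + 1), ∑ t ∈ Finset.Ioc s d,
        (Nat.choose d s : ℝ) * (Nat.choose d t) * ((s : ℝ) - t) ^ 2 *
          ψ ((s : ℝ) / d) * ψ ((t : ℝ) / d) := by
  set g : ℕ → ℝ := fun s => d.choose s * ψ (s / d)
  set x : ℕ → ℝ := fun s => d - s
  have hα' : ∀ p, 2 ^ d * α p = ∑ s ∈ range (d + 1), ((d - p).choose s : ℝ) * ψ (s / d) := by
    intro p; rw [hα]; field_simp
  have hα₀ : 2 ^ d * α 0 = ∑ s ∈ range (d + 1), g s := by simpa using hα' 0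
  have hα₁ : d * 2 ^ d * α 1 = ∑ s ∈ range (d + 1), x s * g s := by
    rw [mul_assoc, hα' 1, ← sum_cast_sub_mul_choose_mul]
    simp only [x, g, mul_assoc]
  have hα₂ : d * (d - 1) * 2 ^ d * α 2
      = ∑ s ∈ range (d + 1), x s ^ 2 * g s - ∑ s ∈ range (d + 1), x s * g s := by
    rw [mul_assoc, hα' 2, ← sum_cast_sub_mul_cast_sub_one_mul_choose_mul, ← sum_sub_distrib]
    refine sum_congr rfl fun s _ => ?_
    ring
  set M₀ := ∑ s ∈ range (d + 1), g s
  set M₁ := ∑ s ∈ range (d + 1), x s * g s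
  set M₂ := ∑ s ∈ range (d + 1), x s ^ 2 * g s
  have hvar : d * 4 ^ d * c = M₀ * M₂ - M₁ ^ 2 := by
    rw [← hα₀, ← hα₁, show (4 : ℝ) ^ d = 2 ^ d * 2 ^ d by rw [← mul_pow]; norm_num, hc]
    linear_combination (2 ^ d * α 0) * (hα₂ + hα₁)
  have hpairs : 2 * (M₀ * M₂ - M₁ ^ 2) = 2 * ∑ s ∈ range (d + 1), ∑ t ∈ Ioc s d,
      (d.choose s : ℝ) * d.choose t * ((s : ℝ) - t) ^ 2 * ψ (s / d) * ψ (t / d) := by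
    rw [two_mul_sum_mul_sum_sq_sub_sq_sum,
      sum_sum_eq_two_mul_sum_sum_filter_lt _ _ (fun s t => by ring) (fun s => by simp)]
    congr 1
    refine sum_congr rfl fun s _ => ?_
    rw [show {t ∈ range (d + 1) | s < t} = Ioc s d by ext t; simp; omega]
    refine sum_congr rfl fun t _ => ?_
    simp only [g, x]
    ring
  have hd₀ : (d : ℝ) ≠ 0 := by exact_mod_cast (by omega : d ≠ 0)
  rw [← mul_left_cancel₀ two_ne_zero hpairs, ← hvar]
  field_simp

theorem stmt8 (d : ℕ) (hd : 2 ≤ d) (ν : ℝ) (hν : 0 < ν)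
    (ψ : ℝ → ℝ)
    (hψ : ∀ t, ψ t = Real.exp (-(1 - Real.sqrt (1 - t)) ^ 2 / (2 * ν ^ 2)))
    (α : ℕ → ℝ)
    (hα : ∀ p, α p = (1 / 2 ^ d) *
      ∑ s ∈ Finset.range (d + 1), (Nat.choose (d - p) s : ℝ) * ψ ((s : ℝ) / d))
    (c : ℝ) (hc : c = (d - 1) * α 0 * α 2 - d * α 1 ^ 2 + α 0 * α 1) :
    c = (1 / (d * 4 ^ d)) *
      ∑ s ∈ Finset.range (d + 1), ∑ t ∈ Finset.Ioc s d,
        (Nat.choose d s : ℝ) * (Nat.choose d t) * ((s : ℝ) - t) ^ 2 *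
          ψ ((s : ℝ) / d) * ψ ((t : ℝ) / d) :=
  stmt8_general d hd ψ α hα c hc
end

section
/- With α_p and c_d as above, exp(−1/ν²)/4 ≤ c_d ≤ 1/4; in particular c_d > 0, since exp(−1/(2ν²))² = exp(−1/ν²) lower-bounds each product ψ(s/d)ψ(t/d) and ∑_{s<t} binom(d,s)binom(d,t)(s−t)² = d·4^{d−1}. -/
/-!
Replace `ψ(s/d)` by an arbitrary weight `w s` and write `u s = C(d, s) w s`, `v s = d - s`.
Since `d C(d-1, s) = (d - s) C(d, s)` and `d (d-1) C(d-2, s) = (d - s)(d - s - 1) C(d, s)`,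
the numbers `2^d α₀`, `d 2^d α₁`, `d (d-1) 2^d α₂` are the moments `∑ u`, `∑ v u`,
`∑ v (v - 1) u`, and `c_d` collapses to `(∑ u ∑ v² u - (∑ v u)²) / (d 4^d)`, which by Lagrange's
identity is `∑_{s,t} C(d,s) C(d,t) w s w t (s - t)² / (2 d 4^d)`. This is monotone in the
products `w s w t`; for `w ≡ 1` one has `α_p = 2^{-p}`, hence `c_d = 1/4`. For `w s = ψ(s/d)`
the products lie between `exp(-1/(2ν²))² = exp(-1/ν²)` and `1`.
-/

open Finset

namespace BinomialMoments

theorem cast_mul_choose_pred (d s : ℕ) :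
    (d : ℝ) * (d - 1).choose s = ((d : ℝ) - s) * d.choose s := by
  rcases Nat.eq_zero_or_pos d with rfl | hd
  · rcases Nat.eq_zero_or_pos s with rfl | hs
    · simp
    · simp [Nat.choose_eq_zero_of_lt hs]
  rcases le_or_gt s d with hs | hs
  · have h := congrArg (Nat.cast : ℕ → ℝ) (Nat.choose_mul_succ_eq (d - 1) s)
    rw [Nat.sub_add_cancel hd] at h
    push_cast [Nat.cast_sub hs] at h
    linarith
  · simp [Nat.choose_eq_zero_of_lt hs, Nat.choose_eq_zero_of_lt (by omega : d - 1 < s)]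

theorem cast_mul_mul_choose_sub_two (d s : ℕ) :
    (d : ℝ) * (d - 1) * (d - 2).choose s = ((d : ℝ) - s) * ((d : ℝ) - s - 1) * d.choose s := by
  rcases Nat.eq_zero_or_pos d with rfl | hd
  · rcases Nat.eq_zero_or_pos s with rfl | hs
    · simp
    · simp [Nat.choose_eq_zero_of_lt hs]
  have h := cast_mul_choose_pred (d - 1) s
  rw [Nat.sub_sub, Nat.cast_sub hd, Nat.cast_one] at h
  calc (d : ℝ) * (d - 1) * (d - 2).choose s = (d * (d - 1).choose s) * ((d : ℝ) - 1 - s) := by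
        rw [mul_assoc, h]; ring
    _ = ((d : ℝ) - s) * ((d : ℝ) - s - 1) * d.choose s := by
        rw [cast_mul_choose_pred]; ring

theorem sum_range_cast_choose_of_le {n d : ℕ} (h : n ≤ d) :
    ∑ s ∈ range (d + 1), (n.choose s : ℝ) = 2 ^ n := by
  rw [← sum_range_add_sum_Ico _ (by omega : n + 1 ≤ d + 1)]
  have hzero : ∑ s ∈ Ico (n + 1) (d + 1), (n.choose s : ℝ) = 0 :=
    sum_eq_zero fun s hs => by
      rw [Nat.choose_eq_zero_of_lt (by simp at hs; omega), Nat.cast_zero]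
  rw [hzero, add_zero]
  exact_mod_cast Nat.sum_range_choose n

theorem sum_mul_sum_sub_sq (n : ℕ) (u v : ℕ → ℝ) :
    ∑ s ∈ range n, ∑ t ∈ range n, u s * u t * (v s - v t) ^ 2
      = 2 * ((∑ s ∈ range n, u s) * (∑ s ∈ range n, v s ^ 2 * u s)
        - (∑ s ∈ range n, v s * u s) ^ 2) := by
  have h : ∀ s t : ℕ, u s * u t * (v s - v t) ^ 2
      = v s ^ 2 * u s * u t - 2 * ((v s * u s) * (v t * u t)) + u s * (v t ^ 2 * u t) := by
    intros; ring
  simp only [h, sum_add_distrib, sum_sub_distrib, ← mul_sum, ← sum_mul]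
  ring

variable (d : ℕ) (w : ℕ → ℝ)

noncomputable section

def alpha (p : ℕ) : ℝ :=
  (1 / 2 ^ d) * ∑ s ∈ range (d + 1), ((d - p).choose s : ℝ) * w s

def coeff : ℝ :=
  ((d : ℝ) - 1) * alpha d w 0 * alpha d w 2 - d * alpha d w 1 ^ 2 + alpha d w 0 * alpha d w 1

def spread : ℝ :=
  ∑ s ∈ range (d + 1), ∑ t ∈ range (d + 1),
    (d.choose s : ℝ) * d.choose t * (w s * w t) * ((s : ℝ) - t) ^ 2

theorem two_pow_mul_alpha_zero :
    2 ^ d * alpha d w 0 = ∑ s ∈ range (d + 1), (d.choose s : ℝ) * w s := by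
  simp [alpha]

theorem mul_two_pow_mul_alpha_one :
    d * 2 ^ d * alpha d w 1
      = ∑ s ∈ range (d + 1), ((d : ℝ) - s) * ((d.choose s : ℝ) * w s) := by
  simp only [alpha, mul_sum]
  refine sum_congr rfl fun s _ => ?_
  rw [← mul_assoc ((d : ℝ) - s), ← cast_mul_choose_pred]
  field_simp

theorem mul_two_pow_mul_alpha_two :
    d * (d - 1) * 2 ^ d * alpha d w 2
      = ∑ s ∈ range (d + 1), ((d : ℝ) - s) * ((d : ℝ) - s - 1) * ((d.choose s : ℝ) * w s) := by
  simp only [alpha, mul_sum]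
  refine sum_congr rfl fun s _ => ?_
  rw [← mul_assoc _ (d.choose s : ℝ), ← cast_mul_mul_choose_sub_two]
  field_simp

theorem spread_eq : spread d w = 2 * d * 4 ^ d * coeff d w := by
  set u : ℕ → ℝ := fun s => (d.choose s : ℝ) * w s
  set v : ℕ → ℝ := fun s => (d : ℝ) - s
  have h0 := two_pow_mul_alpha_zero d w
  have h1 := mul_two_pow_mul_alpha_one d w
  have h2 := mul_two_pow_mul_alpha_two d w
  have hsplit : ∑ s ∈ range (d + 1), ((d : ℝ) - s) * ((d : ℝ) - s - 1) * u s
      = ∑ s ∈ range (d + 1), v s ^ 2 * u s - ∑ s ∈ range (d + 1), v s * u s := by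
    rw [← sum_sub_distrib]; exact sum_congr rfl fun s _ => by ring
  have hlagrange := sum_mul_sum_sub_sq (d + 1) u v
  have hspread : spread d w = ∑ s ∈ range (d + 1), ∑ t ∈ range (d + 1), u s * u t * (v s - v t) ^ 2 :=
    sum_congr rfl fun s _ => sum_congr rfl fun t _ => by simp only [u, v]; ring
  rw [hsplit] at h2
  rw [hspread, hlagrange, coeff, show (4 : ℝ) ^ d = 2 ^ d * 2 ^ d by rw [← mul_pow]; norm_num]
  linear_combination (-2 * ∑ s ∈ range (d + 1), v s ^ 2 * u s) * h0
    - 2 * (2 ^ d * alpha d w 0) * h2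
    - 2 * (2 ^ d * alpha d w 0 - d * 2 ^ d * alpha d w 1 - ∑ s ∈ range (d + 1), v s * u s) * h1

theorem alpha_one {p : ℕ} (hp : p ≤ d) : alpha d (fun _ => 1) p = 1 / 2 ^ p := by
  simp only [alpha, mul_one, sum_range_cast_choose_of_le (Nat.sub_le d p),
    pow_sub₀ (2 : ℝ) two_ne_zero hp]
  field_simp

theorem coeff_one (hd : 2 ≤ d) : coeff d (fun _ => 1) = 1 / 4 := by
  rw [coeff, alpha_one d (p := 0) (by omega), alpha_one d (p := 1) (by omega), alpha_one d hd]
  ring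

variable {d w}

theorem mul_spread_one_le {m : ℝ} (hm : ∀ s ≤ d, ∀ t ≤ d, m ≤ w s * w t) :
    m * spread d (fun _ => 1) ≤ spread d w := by
  simp only [spread, mul_sum]
  refine sum_le_sum fun s hs => sum_le_sum fun t ht => ?_
  have hst := hm s (Nat.lt_succ_iff.mp (mem_range.mp hs)) t (Nat.lt_succ_iff.mp (mem_range.mp ht))
  have hK : 0 ≤ (d.choose s : ℝ) * d.choose t * ((s : ℝ) - t) ^ 2 := by positivity
  linarith [mul_le_mul_of_nonneg_left hst hK]

theorem spread_le_mul_spread_one {M : ℝ} (hM : ∀ s ≤ d, ∀ t ≤ d, w s * w t ≤ M) :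
    spread d w ≤ M * spread d (fun _ => 1) := by
  simp only [spread, mul_sum]
  refine sum_le_sum fun s hs => sum_le_sum fun t ht => ?_
  have hst := hM s (Nat.lt_succ_iff.mp (mem_range.mp hs)) t (Nat.lt_succ_iff.mp (mem_range.mp ht))
  have hK : 0 ≤ (d.choose s : ℝ) * d.choose t * ((s : ℝ) - t) ^ 2 := by positivity
  linarith [mul_le_mul_of_nonneg_left hst hK]

theorem le_coeff (hd : 2 ≤ d) {m : ℝ} (hm : ∀ s ≤ d, ∀ t ≤ d, m ≤ w s * w t) :
    m / 4 ≤ coeff d w := by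
  have h := mul_spread_one_le hm
  rw [spread_eq, spread_eq, coeff_one d hd] at h
  have hpos : (0 : ℝ) < 2 * d * 4 ^ d := by positivity
  nlinarith

theorem coeff_le (hd : 2 ≤ d) {M : ℝ} (hM : ∀ s ≤ d, ∀ t ≤ d, w s * w t ≤ M) :
    coeff d w ≤ M / 4 := by
  have h := spread_le_mul_spread_one hM
  rw [spread_eq, spread_eq, coeff_one d hd] at h
  have hpos : (0 : ℝ) < 2 * d * 4 ^ d := by positivity
  nlinarith

end

end BinomialMoments

theorem sq_one_sub_sqrt_one_sub_le_one {t : ℝ} (ht : 0 ≤ t) : (1 - √(1 - t)) ^ 2 ≤ 1 := by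
  have h0 : 0 ≤ √(1 - t) := Real.sqrt_nonneg _
  have h1 : √(1 - t) ≤ 1 := Real.sqrt_le_one.mpr (by linarith)
  nlinarith

theorem exp_neg_sq_div_le_one (x ν : ℝ) : Real.exp (-x ^ 2 / (2 * ν ^ 2)) ≤ 1 :=
  Real.exp_le_one_iff.mpr (div_nonpos_of_nonpos_of_nonneg (neg_nonpos.mpr (sq_nonneg x)) (by positivity))

theorem exp_neg_inv_le_exp_neg_sq_div {x : ℝ} (ν : ℝ) (hx : x ^ 2 ≤ 1) :
    Real.exp (-1 / (2 * ν ^ 2)) ≤ Real.exp (-x ^ 2 / (2 * ν ^ 2)) := by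
  rw [Real.exp_le_exp, neg_div, neg_div, neg_le_neg_iff]
  exact div_le_div_of_nonneg_right hx (by positivity)

theorem stmt9_general (d : ℕ) (hd : 2 ≤ d) (ν : ℝ)
    (ψ : ℝ → ℝ)
    (hψ : ∀ t, ψ t = Real.exp (-(1 - Real.sqrt (1 - t)) ^ 2 / (2 * ν ^ 2)))
    (α : ℕ → ℝ)
    (hα : ∀ p, α p = (1 / 2 ^ d) *
      ∑ s ∈ Finset.range (d + 1), (Nat.choose (d - p) s : ℝ) * ψ ((s : ℝ) / d))
    (c : ℝ) (hc : c = (d - 1) * α 0 * α 2 - d * α 1 ^ 2 + α 0 * α 1) :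
    Real.exp (-1 / ν ^ 2) / 4 ≤ c ∧ c ≤ 1 / 4 ∧ 0 < c := by
  set w : ℕ → ℝ := fun s => ψ ((s : ℝ) / d)
  have hcw : c = BinomialMoments.coeff d w := by
    rw [hc, funext hα]; rfl
  have hsq : ∀ s : ℕ, (1 - √(1 - (s : ℝ) / d)) ^ 2 ≤ 1 := fun s =>
    sq_one_sub_sqrt_one_sub_le_one (by positivity)
  have hw_pos : ∀ s, 0 ≤ w s := fun s => by simp only [w, hψ]; positivity
  have hw_le : ∀ s, w s ≤ 1 := fun s => by simp only [w, hψ]; exact exp_neg_sq_div_le_one _ ν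
  have hw_ge : ∀ s, Real.exp (-1 / (2 * ν ^ 2)) ≤ w s := fun s => by
    simp only [w, hψ]; exact exp_neg_inv_le_exp_neg_sq_div ν (hsq s)
  have hexp : Real.exp (-1 / ν ^ 2) = Real.exp (-1 / (2 * ν ^ 2)) * Real.exp (-1 / (2 * ν ^ 2)) := by
    rw [← Real.exp_add]; ring_nf
  have hlow : Real.exp (-1 / ν ^ 2) / 4 ≤ c := hcw ▸ BinomialMoments.le_coeff hd fun s _ t _ =>
    hexp ▸ mul_le_mul (hw_ge s) (hw_ge t) (Real.exp_pos _).le (hw_pos s)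
  have hup : c ≤ 1 / 4 := hcw ▸ BinomialMoments.coeff_le hd fun s _ t _ =>
    mul_le_one₀ (hw_le s) (hw_pos t) (hw_le t)
  exact ⟨hlow, hup, (by positivity : 0 < Real.exp (-1 / ν ^ 2) / 4).trans_le hlow⟩

theorem stmt9 (d : ℕ) (hd : 2 ≤ d) (ν : ℝ) (hν : 0 < ν)
    (ψ : ℝ → ℝ)
    (hψ : ∀ t, ψ t = Real.exp (-(1 - Real.sqrt (1 - t)) ^ 2 / (2 * ν ^ 2)))
    (α : ℕ → ℝ)
    (hα : ∀ p, α p = (1 / 2 ^ d) *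
      ∑ s ∈ Finset.range (d + 1), (Nat.choose (d - p) s : ℝ) * ψ ((s : ℝ) / d))
    (c : ℝ) (hc : c = (d - 1) * α 0 * α 2 - d * α 1 ^ 2 + α 0 * α 1) :
    Real.exp (-1 / ν ^ 2) / 4 ≤ c ∧ c ≤ 1 / 4 ∧ 0 < c :=
  stmt9_general d hd ν ψ hψ α hα c hc
end

section
/- Generalized α coefficients: with z and π as above, for p, q ≥ 0 with p+q ≤ d, E[π z₁⋯z_p (1−z_{p+1})⋯(1−z_{p+q})] = 2^{−d} ∑_{s=0}^{d} binom(d−p−q, s−q) ψ(s/d). -/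
/-!
Record a point `z` of the cube by its set `A` of zero coordinates. The two products are the
indicator that `A` avoids the first `p` coordinates and contains the next `q`, i.e. that `A`
lies in the interval `[Q, Pᶜ]` of the subset lattice. Such an `A` is `Q ∪ B` with `B` an
arbitrary subset of the remaining `d - p - q` coordinates, so exactly `binom(d-p-q, s-q)` of
them have `s` elements; the weight `ψ` only enters through `s`.
-/

open Finset

section ZeroSet

variable {α : Type*} [DecidableEq α]

def zeroSetEquiv [Fintype α] : (α → Bool) ≃ Finset α where
  toFun z := {j | z j = false}
  invFun A j := decide (j ∉ A)
  left_inv z := by funext j; cases h : z j <;> simp [h]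
  right_inv A := by ext j; simp

theorem Finset.sum_Icc_apply_card {M : Type*} [AddCommMonoid M] (f : ℕ → M)
    {s t : Finset α} (h : s ⊆ t) :
    ∑ u ∈ Icc s t, f #u = ∑ k ∈ range (#t - #s + 1), (#t - #s).choose k • f (#s + k) := by
  have hdisj : ∀ u ∈ (t \ s).powerset, Disjoint s u := fun u hu =>
    disjoint_of_subset_right (mem_powerset.mp hu) disjoint_sdiff
  rw [Icc_eq_image_powerset h, sum_image, ← card_sdiff_of_subset h,
    ← sum_powerset_apply_card (fun k => f (#s + k))]
  · exact sum_congr rfl fun u hu => by rw [card_union_of_disjoint (hdisj u hu)]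
  · intro u hu v hv huv
    rw [← union_sdiff_cancel_left (hdisj u hu), ← union_sdiff_cancel_left (hdisj v hv)]
    exact congrArg (· \ s) huv

theorem sum_mul_prod_ones_mul_prod_zeros [Fintype α] {R : Type*} [CommRing R] (f : ℕ → R)
    {P Q : Finset α} (hPQ : Disjoint P Q) :
    ∑ z : α → Bool, f #{j | z j = false} * (∏ j ∈ P, if z j then (1 : R) else 0) *
        ∏ j ∈ Q, (1 - if z j then (1 : R) else 0) =
      ∑ k ∈ range (Fintype.card α - #P - #Q + 1),
        ((Fintype.card α - #P - #Q).choose k : R) * f (#Q + k) := by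
  have hsummand : ∀ A : Finset α,
      f #A * (∏ j ∈ P, if j ∉ A then (1 : R) else 0) * ∏ j ∈ Q, (1 - if j ∉ A then (1 : R) else 0)
        = if A ∈ Icc Q Pᶜ then f #A else 0 := by
    intro A
    have hP : (∏ j ∈ P, if j ∉ A then (1 : R) else 0) = if Disjoint P A then 1 else 0 := by
      rw [prod_boole]
      congr 1
      exact propext disjoint_left.symm
    have hQ : (∏ j ∈ Q, (1 - if j ∉ A then (1 : R) else 0)) = if Q ⊆ A then 1 else 0 := by
      simp only [ite_not, sub_ite, sub_self, sub_zero, prod_boole]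
      congr 1
    simp only [hP, hQ, mem_Icc, subset_compl_iff_disjoint_right, disjoint_comm (a := A)]
    by_cases h₁ : Q ⊆ A <;> by_cases h₂ : Disjoint P A <;> simp [h₁, h₂]
  rw [← (zeroSetEquiv (α := α)).symm.sum_comp]
  simp only [zeroSetEquiv, Equiv.coe_fn_symm_mk, decide_eq_true_eq, decide_eq_false_iff_not,
    not_not, filter_mem_eq_inter, univ_inter, hsummand, sum_ite_mem]
  rw [sum_Icc_apply_card f (subset_compl_iff_disjoint_right.mpr hPQ.symm), card_compl]
  simp only [nsmul_eq_mul]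

end ZeroSet

theorem sum_range_ite_choose_mul {R : Type*} [Semiring R] (g : ℕ → R) {m n q : ℕ}
    (h : q + n ≤ m) :
    ∑ s ∈ range (m + 1), (if s < q then 0 else (n.choose (s - q) : R)) * g s =
      ∑ k ∈ range (n + 1), (n.choose k : R) * g (q + k) := by
  obtain ⟨r, hr⟩ : ∃ r, m + 1 = q + r := ⟨m + 1 - q, by omega⟩
  rw [hr, sum_range_add, sum_eq_zero fun s hs => by simp [mem_range.mp hs], zero_add]
  simp only [Nat.add_sub_cancel_left, if_neg (Nat.not_lt.mpr (Nat.le_add_right q _))]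
  refine (sum_subset (range_subset_range.mpr (by omega)) fun k _ hk => ?_).symm
  rw [Nat.choose_eq_zero_of_lt (by simpa using hk), Nat.cast_zero, zero_mul]

theorem Fin.card_filter_val_mem_Ico {d p q : ℕ} (h : p + q ≤ d) :
    #{j : Fin d | p ≤ (j : ℕ) ∧ (j : ℕ) < p + q} = q := by
  have : univ.filter (fun j : Fin d => p ≤ (j : ℕ) ∧ (j : ℕ) < p + q) =
      univ.filter (fun j : Fin d => (j : ℕ) < p + q) \
        univ.filter (fun j : Fin d => (j : ℕ) < p) := by
    ext j; simp only [mem_filter, mem_univ, true_and, mem_sdiff]; omega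
  rw [this, card_sdiff_of_subset (monotone_filter_right _ fun j hj => by omega),
    Fin.card_filter_val_lt, Fin.card_filter_val_lt]
  omega

theorem stmt15_general (d p q : ℕ) (hpq : p + q ≤ d)
    (ψ : ℝ → ℝ) :
    (1 / 2 ^ d) * ∑ z : Fin d → Bool,
        (ψ (((Finset.univ.filter (fun j => z j = false)).card : ℝ) / d) *
          (∏ j ∈ Finset.univ.filter (fun j : Fin d => (j : ℕ) < p),
            (if z j then (1 : ℝ) else 0)) *
          (∏ j ∈ Finset.univ.filter (fun j : Fin d => p ≤ (j : ℕ) ∧ (j : ℕ) < p + q),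
            (1 - if z j then (1 : ℝ) else 0)))
    = (1 / 2 ^ d) * ∑ s ∈ Finset.range (d + 1),
        (if s < q then 0 else (Nat.choose (d - p - q) (s - q) : ℝ)) * ψ ((s : ℝ) / d) := by
  have hPQ : Disjoint (univ.filter fun j : Fin d => (j : ℕ) < p)
      (univ.filter fun j : Fin d => p ≤ (j : ℕ) ∧ (j : ℕ) < p + q) :=
    disjoint_filter.mpr fun j _ h₁ h₂ => by omega
  rw [sum_mul_prod_ones_mul_prod_zeros (fun s => ψ ((s : ℝ) / d)) hPQ,
    Fin.card_filter_val_lt, Fin.card_filter_val_mem_Ico hpq, Fintype.card_fin,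
    min_eq_right (by omega), sum_range_ite_choose_mul (fun s => ψ ((s : ℝ) / d)) (by omega)]

/-- Generalized α coefficients: expectation of
`π z₁⋯z_p (1-z_{p+1})⋯(1-z_{p+q})` over i.i.d. Bernoulli(1/2) coordinates,
with `π = ψ(S/d)` and `S` the number of zero coordinates; here
`binom(n,k) = 0` when `k < 0`. -/
theorem stmt15 (d p q : ℕ) (hd : 1 ≤ d) (hpq : p + q ≤ d) (ν : ℝ) (hν : 0 < ν)
    (ψ : ℝ → ℝ)
    (hψ : ∀ t, ψ t = Real.exp (-(1 - Real.sqrt (1 - t)) ^ 2 / (2 * ν ^ 2))) :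
    (1 / 2 ^ d) * ∑ z : Fin d → Bool,
        (ψ (((Finset.univ.filter (fun j => z j = false)).card : ℝ) / d) *
          (∏ j ∈ Finset.univ.filter (fun j : Fin d => (j : ℕ) < p),
            (if z j then (1 : ℝ) else 0)) *
          (∏ j ∈ Finset.univ.filter (fun j : Fin d => p ≤ (j : ℕ) ∧ (j : ℕ) < p + q),
            (1 - if z j then (1 : ℝ) else 0)))
    = (1 / 2 ^ d) * ∑ s ∈ Finset.range (d + 1),
        (if s < q then 0 else (Nat.choose (d - p - q) (s - q) : ℝ)) * ψ ((s : ℝ) / d) :=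
  stmt15_general d p q hpq ψ
end

section
/- With the σ coefficients bounds: for d ≥ 2 and ν > 0, |σ₀| ≤ 3d/4, |σ₁| ≤ 1/2, |σ₂| ≤ 2·exp(1/(2ν²)), and |σ₃| ≤ 2·exp(1/(2ν²))/d, where the α_p are defined via ψ as above. -/
/-!
Put the weights `q s = C(d, s) * w s`, `w s = ψ (s / d)`, on `{0, …, d}`. Then `2 ^ d * α₀`,
`2 ^ d * d * α₁` and `2 ^ d * d (d - 1) * α₂` are the mass and the first two factorial moments of
`Z = d - S`, where `S` is the index. Since `t ↦ (1 - √(1 - t))²` is convex, `w` is log-concave,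
so the ratio `(d - s) w (s + 1) / w s` is antitone; an index shift turns the moments of `S` into
sums against this ratio, and Chebyshev's sum inequality gives `Var S ≤ E S`, and by reflection
`Var Z ≤ E Z`. Writing `A ≤ 1`, `m`, `v` for the mass, mean and variance of `Z`, the constraints
`0 ≤ v ≤ min m (d - m)` bound both numerators by elementary algebra, while `ψ ≥ exp (-1/(2ν²))`
gives `α₁ - α₂ ≥ exp (-1/(2ν²)) / 4`.
-/

open Finset Real

theorem AntivaryOn.weighted_card_mul_sum_le_sum_mul_sum {ι : Type*} {s : Finset ι}
    {q f g : ι → ℝ} (hfg : AntivaryOn f g s) (hq : ∀ i ∈ s, 0 ≤ q i) :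
    (∑ i ∈ s, q i) * ∑ i ∈ s, q i * f i * g i ≤ (∑ i ∈ s, q i * f i) * ∑ i ∈ s, q i * g i := by
  have hexpand : ∀ i j, q i * q j * ((f i - f j) * (g i - g j)) = q i * f i * g i * q j +
      q i * (q j * f j * g j) - q i * f i * (q j * g j) - q i * g i * (q j * f j) :=
    fun i j => by ring
  have key : ∑ i ∈ s, ∑ j ∈ s, q i * q j * ((f i - f j) * (g i - g j)) ≤ 0 :=
    sum_nonpos fun i hi => sum_nonpos fun j hj =>
      mul_nonpos_of_nonneg_of_nonpos (mul_nonneg (hq i hi) (hq j hj)) (hfg.sub_mul_sub_nonpos hj hi)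
  simp only [hexpand, sum_add_distrib, sum_sub_distrib, ← sum_mul_sum] at key
  linarith

theorem sum_range_choose_mul_shift (n : ℕ) (f : ℕ → ℝ) :
    ∑ s ∈ range (n + 1), (n.choose s : ℝ) * s * f s =
      ∑ s ∈ range (n + 1), (n.choose s : ℝ) * (n - s) * f (s + 1) := by
  rw [sum_range_succ', sum_range_succ]
  simp only [Nat.cast_zero, mul_zero, zero_mul, add_zero, sub_self]
  refine sum_congr rfl fun s hs => ?_
  rw [← Nat.cast_sub (mem_range.1 hs).le]
  norm_cast
  rw [Nat.choose_succ_right_eq]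

theorem sum_range_choose_cast_of_le {m N : ℕ} (h : m ≤ N) :
    ∑ s ∈ range (N + 1), (m.choose s : ℝ) = 2 ^ m := by
  rw [← sum_range_add_sum_Ico _ (by omega : m + 1 ≤ N + 1)]
  rw [sum_eq_zero (s := Ico _ _) fun s hs => by
    rw [Nat.choose_eq_zero_of_lt (by simp at hs; omega)]; simp]
  exact_mod_cast Nat.sum_range_choose m

theorem cast_choose_pred_mul (n s : ℕ) :
    ((n - 1).choose s : ℝ) * n = n.choose s * (n - s) := by
  rcases n with _ | n
  · rcases s <;> simp
  rcases le_or_gt s (n + 1) with hs | hs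
  · rw [Nat.add_sub_cancel, ← Nat.cast_sub hs]
    exact_mod_cast Nat.choose_mul_succ_eq n s
  · rw [Nat.choose_eq_zero_of_lt hs, Nat.choose_eq_zero_of_lt (by omega)]; simp

noncomputable def binomMoment (n : ℕ) (w : ℕ → ℝ) (k : ℕ) : ℝ :=
  ∑ s ∈ range (n + 1), (n.choose s : ℝ) * w s * (s : ℝ) ^ k

section binomMoment

variable {n : ℕ} {w : ℕ → ℝ}

theorem binomMoment_one_sq_le (hw : ∀ s ≤ n, 0 ≤ w s) :
    binomMoment n w 1 ^ 2 ≤ binomMoment n w 0 * binomMoment n w 2 := by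
  have hq : ∀ s ∈ range (n + 1), 0 ≤ (n.choose s : ℝ) * w s :=
    fun s hs => mul_nonneg (Nat.cast_nonneg _) (hw s (Nat.lt_succ_iff.1 (mem_range.1 hs)))
  refine sum_sq_le_sum_mul_sum_of_sq_le_mul _ (fun s hs => by simpa using hq s hs)
    (fun s hs => mul_nonneg (hq s hs) (sq_nonneg _)) fun s _ => le_of_eq (by ring)

theorem binomMoment_zero_pos (hw : ∀ s ≤ n, 0 < w s) : 0 < binomMoment n w 0 := by
  refine sum_pos (fun s hs => ?_) nonempty_range_add_one
  have hs : s ≤ n := Nat.lt_succ_iff.1 (mem_range.1 hs)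
  rw [pow_zero, mul_one]
  exact mul_pos (Nat.cast_pos.2 (Nat.choose_pos hs)) (hw s hs)

theorem binomMoment_reflect (k : ℕ) :
    binomMoment n (fun s => w (n - s)) k =
      ∑ s ∈ range (n + 1), (n.choose s : ℝ) * w s * ((n : ℝ) - s) ^ k := by
  rw [binomMoment, ← sum_range_reflect]
  refine sum_congr rfl fun s hs => ?_
  have hs : s ≤ n := Nat.lt_succ_iff.1 (mem_range.1 hs)
  rw [Nat.add_sub_cancel, Nat.choose_symm hs, Nat.sub_sub_self hs, Nat.cast_sub hs]

/-- `binomRatio n w s = (s + 1) q (s + 1) / q s` for the weights `q s = C(n, s) * w s`. -/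
noncomputable def binomRatio (n : ℕ) (w : ℕ → ℝ) (s : ℕ) : ℝ := (n - s) * w (s + 1) / w s

theorem sum_choose_mul_mul_eq_binomRatio (hw : ∀ s ≤ n, 0 < w s) (f : ℕ → ℝ) :
    ∑ s ∈ range (n + 1), (n.choose s : ℝ) * w s * s * f s =
      ∑ s ∈ range (n + 1), (n.choose s : ℝ) * w s * binomRatio n w s * f (s + 1) :=
  calc ∑ s ∈ range (n + 1), (n.choose s : ℝ) * w s * s * f s
      = ∑ s ∈ range (n + 1), (n.choose s : ℝ) * s * (w s * f s) :=
        sum_congr rfl fun s _ => by ring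
    _ = ∑ s ∈ range (n + 1), (n.choose s : ℝ) * (n - s) * (w (s + 1) * f (s + 1)) :=
        sum_range_choose_mul_shift n _
    _ = ∑ s ∈ range (n + 1), (n.choose s : ℝ) * w s * binomRatio n w s * f (s + 1) :=
        sum_congr rfl fun s hs => by
          have := (hw s (Nat.lt_succ_iff.1 (mem_range.1 hs))).ne'
          rw [binomRatio]
          field_simp

theorem antitoneOn_binomRatio (hw : ∀ s ≤ n, 0 < w s)
    (hlc : ∀ k, k + 2 ≤ n → w k * w (k + 2) ≤ w (k + 1) ^ 2) :
    AntitoneOn (binomRatio n w) (range (n + 1)) := by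
  rw [coe_range]
  refine antitoneOn_of_succ_le Set.ordConnected_Iio fun a _ _ ha => ?_
  rw [Order.succ_eq_add_one, Set.mem_Iio] at ha
  have hwa := hw a (by omega)
  have hwa₁ := hw (a + 1) (by omega)
  have han : (a : ℝ) + 1 ≤ n := by exact_mod_cast Nat.lt_succ_iff.1 ha
  simp only [binomRatio, Order.succ_eq_add_one]
  push_cast
  rcases Nat.lt_or_ge (a + 1) n with h | h
  · have hratio : w (a + 1 + 1) / w (a + 1) ≤ w (a + 1) / w a := by
      rw [div_le_div_iff₀ hwa₁ hwa]
      nlinarith [hlc a (by omega)]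
    rw [mul_div_assoc, mul_div_assoc]
    exact mul_le_mul (by linarith) hratio (div_nonneg (hw _ (by omega)).le hwa₁.le)
      (by linarith)
  · rw [show (n : ℝ) = a + 1 by exact_mod_cast (by omega : n = a + 1)]
    simp only [sub_self, zero_mul, zero_div, add_sub_cancel_left, one_mul]
    exact div_nonneg hwa₁.le hwa.le

theorem binomMoment_variance_le_mean (hw : ∀ s ≤ n, 0 < w s)
    (hlc : ∀ k, k + 2 ≤ n → w k * w (k + 2) ≤ w (k + 1) ^ 2) :
    binomMoment n w 0 * binomMoment n w 2 - binomMoment n w 1 ^ 2 ≤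
      binomMoment n w 0 * binomMoment n w 1 := by
  have hcheb := ((antitoneOn_binomRatio hw hlc).antivaryOn
    (Nat.mono_cast.monotoneOn _)).weighted_card_mul_sum_le_sum_mul_sum
    (q := fun s => (n.choose s : ℝ) * w s)
    (fun s hs => mul_nonneg (Nat.cast_nonneg _) (hw s (Nat.lt_succ_iff.1 (mem_range.1 hs))).le)
  have h₀ : binomMoment n w 0 = ∑ s ∈ range (n + 1), (n.choose s : ℝ) * w s := by
    simp [binomMoment]
  have h₁ : binomMoment n w 1 = ∑ s ∈ range (n + 1), (n.choose s : ℝ) * w s * s := by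
    simp [binomMoment]
  have h₁' : binomMoment n w 1 =
      ∑ s ∈ range (n + 1), (n.choose s : ℝ) * w s * binomRatio n w s := by
    simpa [binomMoment] using sum_choose_mul_mul_eq_binomRatio hw 1
  have h₂ : binomMoment n w 2 =
      ∑ s ∈ range (n + 1), (n.choose s : ℝ) * w s * binomRatio n w s * s +
        ∑ s ∈ range (n + 1), (n.choose s : ℝ) * w s * binomRatio n w s := by
    simp only [binomMoment, sq, ← mul_assoc, sum_choose_mul_mul_eq_binomRatio hw Nat.cast,
      Nat.cast_succ, mul_add, mul_one, sum_add_distrib]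
  rw [← h₀, ← h₁', ← h₁] at hcheb
  rw [h₂, ← h₁']
  nlinarith [hcheb]

theorem binomMoment_variance_le_sub_mean (hw : ∀ s ≤ n, 0 < w s)
    (hlc : ∀ k, k + 2 ≤ n → w k * w (k + 2) ≤ w (k + 1) ^ 2) :
    binomMoment n w 0 * binomMoment n w 2 - binomMoment n w 1 ^ 2 ≤
      binomMoment n w 0 * (n * binomMoment n w 0 - binomMoment n w 1) := by
  have hlc' (k : ℕ) (hk : k + 2 ≤ n) :
      w (n - k) * w (n - (k + 2)) ≤ w (n - (k + 1)) ^ 2 := by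
    have := hlc (n - (k + 2)) (by omega)
    rw [show n - (k + 2) + 2 = n - k by omega, show n - (k + 2) + 1 = n - (k + 1) by omega] at this
    linarith
  have h := binomMoment_variance_le_mean (w := fun s => w (n - s))
    (fun s _ => hw _ (Nat.sub_le _ _)) hlc'
  have e₀ : binomMoment n (fun s => w (n - s)) 0 = binomMoment n w 0 := by
    rw [binomMoment_reflect]
    simp [binomMoment]
  have e₁ : binomMoment n (fun s => w (n - s)) 1 = n * binomMoment n w 0 - binomMoment n w 1 := by
    rw [binomMoment_reflect, binomMoment, binomMoment, mul_sum, ← sum_sub_distrib]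
    exact sum_congr rfl fun s _ => by ring
  have e₂ : binomMoment n (fun s => w (n - s)) 2 =
      n ^ 2 * binomMoment n w 0 - 2 * n * binomMoment n w 1 + binomMoment n w 2 := by
    rw [binomMoment_reflect, binomMoment, binomMoment, binomMoment, mul_sum, mul_sum,
      ← sum_sub_distrib, ← sum_add_distrib]
    exact sum_congr rfl fun s _ => by ring
  rw [e₀, e₁, e₂] at h
  linear_combination h

end binomMoment

noncomputable def binomAvg (d p : ℕ) (w : ℕ → ℝ) : ℝ :=
  1 / 2 ^ d * ∑ s ∈ range (d + 1), ((d - p).choose s : ℝ) * w s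

section binomAvg

variable {d p : ℕ} {w : ℕ → ℝ}

theorem binomAvg_const (hp : p ≤ d) (c : ℝ) : binomAvg d p (fun _ => c) = c / 2 ^ p := by
  rw [binomAvg, ← sum_mul, sum_range_choose_cast_of_le (Nat.sub_le d p),
    pow_sub₀ _ two_ne_zero hp]
  field_simp

theorem binomAvg_mono {w' : ℕ → ℝ} (h : ∀ s ≤ d, w s ≤ w' s) :
    binomAvg d p w ≤ binomAvg d p w' := by
  unfold binomAvg
  gcongr with s hs
  exact h s (Nat.lt_succ_iff.1 (mem_range.1 hs))

theorem binomAvg_nonneg (hw : ∀ s ≤ d, 0 ≤ w s) : 0 ≤ binomAvg d p w :=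
  mul_nonneg (by positivity) (sum_nonneg fun s hs =>
    mul_nonneg (Nat.cast_nonneg _) (hw s (Nat.lt_succ_iff.1 (mem_range.1 hs))))

theorem binomAvg_le (hp : p ≤ d) (hw : ∀ s ≤ d, w s ≤ 1) : binomAvg d p w ≤ 1 / 2 ^ p := by
  simpa [binomAvg_const hp] using binomAvg_mono (p := p) hw

theorem binomAvg_sub_binomAvg_ge {q : ℕ} (hpq : p ≤ q) (hq : q ≤ d) {m : ℝ}
    (hm : ∀ s ≤ d, m ≤ w s) : m / 2 ^ p - m / 2 ^ q ≤ binomAvg d p w - binomAvg d q w := by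
  rw [← binomAvg_const (hpq.trans hq), ← binomAvg_const hq]
  unfold binomAvg
  rw [← mul_sub, ← mul_sub, ← sum_sub_distrib, ← sum_sub_distrib]
  refine mul_le_mul_of_nonneg_left (sum_le_sum fun s hs => ?_) (by positivity)
  have : ((d - q).choose s : ℝ) ≤ (d - p).choose s := by
    exact_mod_cast Nat.choose_le_choose s (Nat.sub_le_sub_left hpq d)
  nlinarith [hm s (Nat.lt_succ_iff.1 (mem_range.1 hs))]

theorem binomAvg_zero : binomAvg d 0 w = binomMoment d w 0 / 2 ^ d := by
  simp [binomAvg, binomMoment, div_eq_inv_mul]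

theorem two_pow_mul_binomAvg_one :
    2 ^ d * (d * binomAvg d 1 w) = d * binomMoment d w 0 - binomMoment d w 1 := by
  simp only [binomAvg, binomMoment, pow_zero, pow_one, mul_one, mul_sum, ← sum_sub_distrib]
  refine sum_congr rfl fun s _ => ?_
  have := cast_choose_pred_mul d s
  field_simp
  linear_combination w s * this

theorem two_pow_mul_binomAvg_two (hd : 1 ≤ d) :
    2 ^ d * (d * (d - 1) * binomAvg d 2 w) =
      d * (d - 1) * binomMoment d w 0 - (2 * d - 1) * binomMoment d w 1 + binomMoment d w 2 := by
  simp only [binomAvg, binomMoment, pow_zero, pow_one, mul_one, mul_sum, ← sum_sub_distrib,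
    ← sum_add_distrib]
  refine sum_congr rfl fun s _ => ?_
  have h₁ := cast_choose_pred_mul d s
  have h₂ := cast_choose_pred_mul (d - 1) s
  rw [Nat.sub_sub, Nat.cast_sub hd, Nat.cast_one] at h₂
  field_simp
  linear_combination w s * (d * h₂ + (d - 1 - s) * h₁)

end binomAvg

/- `A`, `m`, `v` stand for the mass, mean and variance of `Z`; `h₁` and `h₂` express `α₁` and
`α₂` through them. -/
theorem abs_sq_sub_mul_le_of_variance_le {n A m v a₁ a₂ : ℝ} (hn : 2 ≤ n) (hA : 0 ≤ A)
    (hA₁ : A ≤ 1) (hv : 0 ≤ v) (hvm : v ≤ m) (hvm' : v ≤ n - m)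
    (h₁ : n * a₁ = A * m) (h₂ : n * (n - 1) * a₂ = A * (v + m ^ 2 - m)) :
    |a₁ ^ 2 - A * a₂| ≤ 1 / (2 * n) := by
  have key : n ^ 2 * (n - 1) * (a₁ ^ 2 - A * a₂) = A ^ 2 * (m * (n - m) - n * v) := by
    linear_combination (n - 1) * (n * a₁ + A * m) * h₁ - n * A * h₂
  have hbound : |m * (n - m) - n * v| ≤ n ^ 2 / 4 := by
    rw [abs_le]
    constructor
    · rcases le_total m (n - m) with h | h <;> nlinarith
    · nlinarith [sq_nonneg (2 * m - n)]
  have hscaled : n ^ 2 * (n - 1) * |a₁ ^ 2 - A * a₂| ≤ n ^ 2 * (n - 1) * (1 / (2 * n)) := by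
    have hA_sq : A ^ 2 ≤ 1 := by nlinarith
    have hn1 : 0 ≤ n ^ 2 * (n - 1) := by nlinarith
    rw [← abs_of_nonneg hn1, ← abs_mul, key, abs_mul, abs_of_nonneg (sq_nonneg A),
      abs_of_nonneg hn1, mul_one_div, le_div_iff₀ (by linarith)]
    have : A ^ 2 * |m * (n - m) - n * v| ≤ n ^ 2 / 4 := by
      nlinarith [abs_nonneg (m * (n - m) - n * v)]
    nlinarith
  exact le_of_mul_le_mul_left hscaled (by nlinarith)

theorem abs_cross_sub_le_of_variance_le {n A m v a₁ a₂ : ℝ} (hn : 2 ≤ n) (hA : 0 ≤ A)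
    (hA₁ : A ≤ 1) (hv : 0 ≤ v) (hvm : v ≤ m) (hvm' : v ≤ n - m)
    (h₁ : n * a₁ = A * m) (h₂ : n * (n - 1) * a₂ = A * (v + m ^ 2 - m)) :
    |(n - 1) * A * a₂ - n * a₁ ^ 2 + A * a₁ + a₁ ^ 2 - A * a₂| ≤ 1 / 2 := by
  have key : n ^ 2 * (n - 1) * ((n - 1) * A * a₂ - n * a₁ ^ 2 + A * a₁ + a₁ ^ 2 - A * a₂) =
      A ^ 2 * (n * (n - 2) * v + m * (n - m)) := by
    linear_combination (n * (n - 2) * A) * h₂ +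
      (-(n - 1) ^ 2 * (n * a₁ + A * m) + n * (n - 1) * A) * h₁
  have hc : 0 ≤ n * (n - 2) := by nlinarith
  have hbound : 0 ≤ n * (n - 2) * v + m * (n - m) ∧
      n * (n - 2) * v + m * (n - m) ≤ n ^ 2 * (n - 1) / 2 := by
    constructor
    · nlinarith [mul_nonneg hc hv, mul_nonneg (hv.trans hvm) (hv.trans hvm')]
    · rcases le_total m (n - m) with h | h
      · nlinarith [mul_le_mul_of_nonneg_left hvm hc,
          mul_nonneg (by linarith : 0 ≤ n / 2 - m) (by nlinarith : 0 ≤ n ^ 2 - 3 * n / 2 - m)]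
      · nlinarith [mul_le_mul_of_nonneg_left hvm' hc,
          mul_nonneg (by linarith : 0 ≤ n / 2 - (n - m))
            (by nlinarith : 0 ≤ n ^ 2 - 3 * n / 2 - (n - m))]
  have hscaled : n ^ 2 * (n - 1) * |(n - 1) * A * a₂ - n * a₁ ^ 2 + A * a₁ + a₁ ^ 2 - A * a₂|
      ≤ n ^ 2 * (n - 1) * (1 / 2) := by
    have hA_sq : A ^ 2 ≤ 1 := by nlinarith
    rw [← abs_of_nonneg (by nlinarith : 0 ≤ n ^ 2 * (n - 1)), ← abs_mul, key, abs_mul,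
      abs_of_nonneg (sq_nonneg A), abs_of_nonneg hbound.1,
      abs_of_nonneg (by nlinarith : 0 ≤ n ^ 2 * (n - 1))]
    nlinarith
  exact le_of_mul_le_mul_left hscaled (by nlinarith)

theorem binomAvg_bounds_of_logConcave {d : ℕ} {w : ℕ → ℝ} (hd : 2 ≤ d) (hw : ∀ s ≤ d, 0 < w s)
    (hw₁ : ∀ s ≤ d, w s ≤ 1) (hlc : ∀ k, k + 2 ≤ d → w k * w (k + 2) ≤ w (k + 1) ^ 2) :
    |binomAvg d 1 w ^ 2 - binomAvg d 0 w * binomAvg d 2 w| ≤ 1 / (2 * d) ∧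
      |(d - 1) * binomAvg d 0 w * binomAvg d 2 w - d * binomAvg d 1 w ^ 2 +
        binomAvg d 0 w * binomAvg d 1 w + binomAvg d 1 w ^ 2 -
          binomAvg d 0 w * binomAvg d 2 w| ≤ 1 / 2 := by
  have hA : 0 ≤ binomAvg d 0 w := binomAvg_nonneg fun s hs => (hw s hs).le
  have hA₁ : binomAvg d 0 w ≤ 1 := by simpa using binomAvg_le (p := 0) (Nat.zero_le d) hw₁
  have hCS := binomMoment_one_sq_le fun s hs => (hw s hs).le
  have hS := binomMoment_variance_le_mean hw hlc
  have hZ := binomMoment_variance_le_sub_mean hw hlc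
  have e₁ := two_pow_mul_binomAvg_one (d := d) (w := w)
  have e₂ := two_pow_mul_binomAvg_two (d := d) (w := w) (by omega)
  have hM₀ := binomMoment_zero_pos hw
  have hA₀ := binomAvg_zero (d := d) (w := w)
  set M := binomMoment d w
  have hd' : (2 : ℝ) ≤ d := by exact_mod_cast hd
  set m := (d * M 0 - M 1) / M 0 with hm
  set v := (M 0 * M 2 - M 1 ^ 2) / M 0 ^ 2 with hvdef
  have hv : 0 ≤ v := div_nonneg (by linarith) (by positivity)
  have hvm : v ≤ m := by
    rw [div_le_div_iff₀ (by positivity) hM₀]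
    nlinarith
  have hvm' : v ≤ d - m := by
    rw [show (d : ℝ) - m = M 1 / M 0 by rw [hm]; field_simp; ring,
      div_le_div_iff₀ (by positivity) hM₀]
    nlinarith
  have h₁ : d * binomAvg d 1 w = binomAvg d 0 w * m := by
    rw [hA₀, hm]
    field_simp
    linear_combination e₁
  have h₂ : d * (d - 1) * binomAvg d 2 w = binomAvg d 0 w * (v + m ^ 2 - m) := by
    rw [hA₀, hm, hvdef]
    field_simp
    linear_combination M 0 * e₂
  exact ⟨abs_sq_sub_mul_le_of_variance_le hd' hA hA₁ hv hvm hvm' h₁ h₂,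
    abs_cross_sub_le_of_variance_le hd' hA hA₁ hv hvm hvm' h₁ h₂⟩

theorem sigma_bounds_of_logConcave {d : ℕ} {w : ℕ → ℝ} {ε : ℝ} (hd : 2 ≤ d) (hε : 0 < ε)
    (hεw : ∀ s ≤ d, ε ≤ w s) (hw₁ : ∀ s ≤ d, w s ≤ 1)
    (hlc : ∀ k, k + 2 ≤ d → w k * w (k + 2) ≤ w (k + 1) ^ 2)
    {α : ℕ → ℝ} (hα : ∀ p, α p = binomAvg d p w) :
    |(d - 1) * α 2 + α 1| ≤ 3 * d / 4 ∧ |-α 1| ≤ 1 / 2 ∧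
      |((d - 1) * α 0 * α 2 - d * α 1 ^ 2 + α 0 * α 1 + α 1 ^ 2 - α 0 * α 2) / (α 1 - α 2)| ≤
        2 / ε ∧
      |(α 1 ^ 2 - α 0 * α 2) / (α 1 - α 2)| ≤ 2 / ε / d := by
  obtain rfl : α = fun p => binomAvg d p w := funext hα
  have hw s (hs : s ≤ d) : 0 < w s := hε.trans_le (hεw s hs)
  obtain ⟨hD, hN⟩ := binomAvg_bounds_of_logConcave hd hw hw₁ hlc
  have hgap : ε / 4 ≤ binomAvg d 1 w - binomAvg d 2 w := by
    have := binomAvg_sub_binomAvg_ge (by norm_num : 1 ≤ 2) hd hεw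
    linarith
  have hgap₀ : 0 < binomAvg d 1 w - binomAvg d 2 w := lt_of_lt_of_le (by positivity) hgap
  have hα₁ := binomAvg_le (by omega : 1 ≤ d) hw₁
  have hα₂ := binomAvg_le hd hw₁
  have hα₁₀ := binomAvg_nonneg (p := 1) fun s hs => (hw s hs).le
  have hα₂₀ := binomAvg_nonneg (p := 2) fun s hs => (hw s hs).le
  have hd' : (2 : ℝ) ≤ d := by exact_mod_cast hd
  refine ⟨?_, ?_, ?_, ?_⟩
  · rw [abs_of_nonneg (by nlinarith)]
    nlinarith
  · rw [abs_neg, abs_of_nonneg hα₁₀]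
    simpa using hα₁
  · rw [abs_div, abs_of_pos hgap₀]
    calc _ ≤ 1 / 2 / (ε / 4) := div_le_div₀ (by norm_num) hN (by positivity) hgap
      _ = 2 / ε := by field_simp; ring
  · rw [abs_div, abs_of_pos hgap₀]
    calc _ ≤ 1 / (2 * d) / (ε / 4) := div_le_div₀ (by positivity) hD (by positivity) hgap
      _ = 2 / ε / d := by field_simp; ring

noncomputable def psi (ν t : ℝ) : ℝ := exp (-(1 - √(1 - t)) ^ 2 / (2 * ν ^ 2))

section psi

variable {ν t : ℝ}

theorem psi_pos : 0 < psi ν t := exp_pos _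

theorem psi_le_one : psi ν t ≤ 1 :=
  exp_le_one_iff.2 (div_nonpos_of_nonpos_of_nonneg (neg_nonpos.2 (sq_nonneg _)) (by positivity))

theorem exp_neg_le_psi (ht : 0 ≤ t) : exp (-(1 / (2 * ν ^ 2))) ≤ psi ν t := by
  rw [psi, exp_le_exp, neg_div, neg_le_neg_iff]
  have h₀ := sqrt_nonneg (1 - t)
  have h₁ : √(1 - t) ≤ 1 := sqrt_le_one.2 (by linarith)
  exact div_le_div_of_nonneg_right (by nlinarith) (by positivity)

theorem psi_mul_psi_le_sq {x y : ℝ} (hx : x ≤ 1) (hy : y ≤ 1) :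
    psi ν x * psi ν y ≤ psi ν ((x + y) / 2) ^ 2 := by
  have hconc := strictConcaveOn_sqrt.concaveOn.2 (Set.mem_Ici.2 (by linarith : 0 ≤ 1 - x))
    (Set.mem_Ici.2 (by linarith : 0 ≤ 1 - y)) (by norm_num : (0 : ℝ) ≤ 1 / 2)
    (by norm_num : (0 : ℝ) ≤ 1 / 2) (by norm_num)
  simp only [smul_eq_mul] at hconc
  rw [show 1 / 2 * (1 - x) + 1 / 2 * (1 - y) = 1 - (x + y) / 2 by ring] at hconc
  rw [psi, psi, psi, ← exp_add, ← exp_nat_mul, exp_le_exp, ← add_div, Nat.cast_ofNat,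
    ← mul_div_assoc]
  refine div_le_div_of_nonneg_right ?_ (by positivity)
  have ha := sq_sqrt (by linarith : 0 ≤ 1 - x)
  have hb := sq_sqrt (by linarith : 0 ≤ 1 - y)
  have hc := sq_sqrt (by linarith : 0 ≤ 1 - (x + y) / 2)
  nlinarith

theorem psi_div_mul_psi_div_le_sq {d k : ℕ} (hk : k + 2 ≤ d) :
    psi ν (k / d) * psi ν ((k + 2 : ℕ) / d) ≤ psi ν ((k + 1 : ℕ) / d) ^ 2 := by
  have hle (s : ℕ) (hs : s ≤ d) : (s : ℝ) / d ≤ 1 :=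
    div_le_one_of_le₀ (by exact_mod_cast hs) (Nat.cast_nonneg d)
  have := psi_mul_psi_le_sq (ν := ν) (hle k (by omega)) (hle (k + 2) hk)
  rwa [show ((k : ℝ) / d + ((k + 2 : ℕ) : ℝ) / d) / 2 = ((k + 1 : ℕ) : ℝ) / d by
    push_cast; ring] at this

end psi

theorem stmt16_general (d : ℕ) (hd : 2 ≤ d) (ν : ℝ)
    (ψ : ℝ → ℝ)
    (hψ : ∀ t, ψ t = Real.exp (-(1 - Real.sqrt (1 - t)) ^ 2 / (2 * ν ^ 2)))
    (α : ℕ → ℝ)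
    (hα : ∀ p, α p = (1 / 2 ^ d) *
      ∑ s ∈ Finset.range (d + 1), (Nat.choose (d - p) s : ℝ) * ψ ((s : ℝ) / d))
    (c s0 s1 s2 s3 : ℝ)
    (hc : c = (d - 1) * α 0 * α 2 - d * α 1 ^ 2 + α 0 * α 1)
    (hs0 : s0 = (d - 1) * α 2 + α 1) (hs1 : s1 = -α 1)
    (hs2 : s2 = (c + α 1 ^ 2 - α 0 * α 2) / (α 1 - α 2))
    (hs3 : s3 = (α 1 ^ 2 - α 0 * α 2) / (α 1 - α 2)) :
    |s0| ≤ 3 * d / 4 ∧ |s1| ≤ 1 / 2 ∧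
    |s2| ≤ 2 * Real.exp (1 / (2 * ν ^ 2)) ∧
    |s3| ≤ 2 * Real.exp (1 / (2 * ν ^ 2)) / d := by
  obtain rfl : ψ = psi ν := funext hψ
  subst hc hs0 hs1 hs2 hs3
  have := sigma_bounds_of_logConcave (w := fun s => psi ν (s / d)) hd (exp_pos _)
    (fun _ _ => exp_neg_le_psi (by positivity)) (fun _ _ => psi_le_one)
    (fun _ hk => psi_div_mul_psi_div_le_sq hk) hα
  rwa [exp_neg, div_inv_eq_mul] at this

theorem stmt16 (d : ℕ) (hd : 2 ≤ d) (ν : ℝ) (hν : 0 < ν)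
    (ψ : ℝ → ℝ)
    (hψ : ∀ t, ψ t = Real.exp (-(1 - Real.sqrt (1 - t)) ^ 2 / (2 * ν ^ 2)))
    (α : ℕ → ℝ)
    (hα : ∀ p, α p = (1 / 2 ^ d) *
      ∑ s ∈ Finset.range (d + 1), (Nat.choose (d - p) s : ℝ) * ψ ((s : ℝ) / d))
    (c s0 s1 s2 s3 : ℝ)
    (hc : c = (d - 1) * α 0 * α 2 - d * α 1 ^ 2 + α 0 * α 1)
    (hs0 : s0 = (d - 1) * α 2 + α 1) (hs1 : s1 = -α 1)
    (hs2 : s2 = (c + α 1 ^ 2 - α 0 * α 2) / (α 1 - α 2))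
    (hs3 : s3 = (α 1 ^ 2 - α 0 * α 2) / (α 1 - α 2)) :
    |s0| ≤ 3 * d / 4 ∧ |s1| ≤ 1 / 2 ∧
    |s2| ≤ 2 * Real.exp (1 / (2 * ν ^ 2)) ∧
    |s3| ≤ 2 * Real.exp (1 / (2 * ν ^ 2)) / d :=
  stmt16_general d hd ν ψ hψ α hα c s0 s1 s2 s3 hc hs0 hs1 hs2 hs3
end

section
/- LIME limit explanation for a pixel coordinate function: let z₁,…,z_d be i.i.d. Bernoulli(1/2), π the corresponding weight, and for u ∈ J_j let x_u = z_j ξ_u + (1−z_j) ξ̄_u. Then E[π x_u] = α₁(ξ_u − ξ̄_u) + α₀ ξ̄_u, E[π z_j x_u] = α₁(ξ_u − ξ̄_u) + α₁ ξ̄_u, and for k ≠ j, E[π z_k x_u] = α₂(ξ_u − ξ̄_u) + α₁ ξ̄_u. -/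
/-!
The weight `π` depends on `z` only through the number of zeros, so it is invariant under
permutations of the coordinates. Hence `E[π ∏_{i ∈ s} z_i]` depends only on `#s`, which gives
`E[π z_j] = α₁` and `E[π z_j z_k] = α₂` for `j ≠ k`. Writing `x_u = z_j (ξ_u - ξ̄_u) + ξ̄_u`
and using `z_j² = z_j`, the three expectations are linear combinations of these moments.
-/

open Finset

lemma card_filter_comp_perm {ι : Type*} [Fintype ι] (σ : Equiv.Perm ι) (z : ι → Bool)
    (b : Bool) :
    #{i | (z ∘ σ) i = b} = #{i | z i = b} :=
  card_equiv σ (by simp)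

section PermInvariant

variable {ι : Type*} [Fintype ι] [DecidableEq ι]

lemma sum_mul_comp_perm {R : Type*} [CommSemiring R] {π : (ι → Bool) → R}
    (hπ : ∀ (σ : Equiv.Perm ι) z, π (z ∘ σ) = π z) (σ : Equiv.Perm ι)
    (F : (ι → Bool) → R) :
    ∑ z, π z * F (z ∘ σ) = ∑ z, π z * F z :=
  Fintype.sum_equiv (σ.symm.arrowCongr (Equiv.refl Bool)) _ _ fun z => by
    show π z * F (z ∘ σ) = π (z ∘ σ) * F (z ∘ σ)
    rw [hπ]

lemma sum_mul_prod_eq_of_card_eq {R : Type*} [CommSemiring R] {π : (ι → Bool) → R}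
    (hπ : ∀ (σ : Equiv.Perm ι) z, π (z ∘ σ) = π z) (ind : (ι → Bool) → ι → R)
    (hind : ∀ z i, ind z i = if z i then 1 else 0) {s t : Finset ι} (hst : #s = #t) :
    ∑ z, π z * ∏ i ∈ s, ind z i = ∑ z, π z * ∏ i ∈ t, ind z i := by
  obtain ⟨σ, rfl⟩ := Equiv.Perm.exists_map_finset_eq s t hst
  rw [← sum_mul_comp_perm hπ σ]
  simp [hind]

end PermInvariant

theorem stmt18_general (d : ℕ)
    (ψ : ℝ → ℝ)
    (π : (Fin d → Bool) → ℝ)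
    (hπ : ∀ z, π z = ψ (((Finset.univ.filter (fun j => z j = false)).card : ℝ) / d))
    (ind : (Fin d → Bool) → Fin d → ℝ)
    (hind : ∀ z j, ind z j = if z j then 1 else 0)
    (α : ℕ → ℝ)
    (hα : ∀ p : ℕ, α p = (1 / 2 ^ d) * ∑ z : Fin d → Bool,
      π z * ∏ i ∈ Finset.univ.filter (fun i : Fin d => (i : ℕ) < p), ind z i)
    (j k : Fin d) (hjk : k ≠ j) (ξu ξbu : ℝ)
    (x : (Fin d → Bool) → ℝ)
    (hx : ∀ z, x z = ind z j * ξu + (1 - ind z j) * ξbu) :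
    (1 / 2 ^ d) * (∑ z : Fin d → Bool, π z * x z)
        = α 1 * (ξu - ξbu) + α 0 * ξbu ∧
    (1 / 2 ^ d) * (∑ z : Fin d → Bool, π z * ind z j * x z)
        = α 1 * (ξu - ξbu) + α 1 * ξbu ∧
    (1 / 2 ^ d) * (∑ z : Fin d → Bool, π z * ind z k * x z)
        = α 2 * (ξu - ξbu) + α 1 * ξbu := by
  have hinv : ∀ (σ : Equiv.Perm (Fin d)) z, π (z ∘ σ) = π z := fun σ z => by
    rw [hπ, hπ, card_filter_comp_perm]
  have hmoment : ∀ s : Finset (Fin d),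
      α #s = (1 / 2 ^ d) * ∑ z, π z * ∏ i ∈ s, ind z i := fun s => by
    rw [hα, sum_mul_prod_eq_of_card_eq hinv ind hind]
    rw [Fin.card_filter_val_lt, min_eq_right ((card_le_univ s).trans_eq (Fintype.card_fin d))]
  have hα0 : α 0 = (1 / 2 ^ d) * ∑ z, π z := by simpa using hmoment ∅
  have hα1j : α 1 = (1 / 2 ^ d) * ∑ z, π z * ind z j := by simpa using hmoment {j}
  have hα2 : α 2 = (1 / 2 ^ d) * ∑ z, π z * (ind z j * ind z k) := by
    simpa [card_pair hjk.symm, prod_pair hjk.symm] using hmoment {j, k}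
  have hα1k : α 1 = (1 / 2 ^ d) * ∑ z, π z * ind z k := by simpa using hmoment {k}
  have hxj : ∀ z, x z = ind z j * (ξu - ξbu) + ξbu := fun z => by rw [hx]; ring
  have hjx : ∀ z, ind z j * x z = ind z j * (ξu - ξbu) + ind z j * ξbu := fun z => by
    rw [hx, hind]; split_ifs <;> ring
  have hkx : ∀ z, ind z k * x z = ind z j * ind z k * (ξu - ξbu) + ind z k * ξbu :=
    fun z => by rw [hxj]; ring
  refine ⟨?_, ?_, ?_⟩
  · rw [hα0, hα1j]
    simp only [hxj, mul_add, sum_add_distrib, ← mul_assoc, ← sum_mul]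
  · simp_rw [hα1j, mul_assoc, hjx]
    simp only [mul_add, sum_add_distrib, ← mul_assoc, ← sum_mul]
  · simp_rw [hα1k, hα2, mul_assoc, hkx]
    simp only [mul_add, sum_add_distrib, ← mul_assoc, ← sum_mul]

/-- LIME limit quantities for a pixel coordinate function: with `z` i.i.d. Bernoulli(1/2),
`π = ψ(S/d)`, `x_u = z_j ξ_u + (1-z_j) ξ̄_u`, and `α_p = E[π z₁⋯z_p]`, we compute
`E[π x_u]`, `E[π z_j x_u]`, and `E[π z_k x_u]` for `k ≠ j`. Expectations are written as
uniform averages over `z : Fin d → Bool`. -/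
theorem stmt18 (d : ℕ) (hd : 2 ≤ d) (ν : ℝ) (hν : 0 < ν)
    (ψ : ℝ → ℝ)
    (hψ : ∀ t, ψ t = Real.exp (-(1 - Real.sqrt (1 - t)) ^ 2 / (2 * ν ^ 2)))
    (π : (Fin d → Bool) → ℝ)
    (hπ : ∀ z, π z = ψ (((Finset.univ.filter (fun j => z j = false)).card : ℝ) / d))
    (ind : (Fin d → Bool) → Fin d → ℝ)
    (hind : ∀ z j, ind z j = if z j then 1 else 0)
    (α : ℕ → ℝ)
    (hα : ∀ p : ℕ, α p = (1 / 2 ^ d) * ∑ z : Fin d → Bool,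
      π z * ∏ i ∈ Finset.univ.filter (fun i : Fin d => (i : ℕ) < p), ind z i)
    (j k : Fin d) (hjk : k ≠ j) (ξu ξbu : ℝ)
    (x : (Fin d → Bool) → ℝ)
    (hx : ∀ z, x z = ind z j * ξu + (1 - ind z j) * ξbu) :
    (1 / 2 ^ d) * (∑ z : Fin d → Bool, π z * x z)
        = α 1 * (ξu - ξbu) + α 0 * ξbu ∧
    (1 / 2 ^ d) * (∑ z : Fin d → Bool, π z * ind z j * x z)
        = α 1 * (ξu - ξbu) + α 1 * ξbu ∧
    (1 / 2 ^ d) * (∑ z : Fin d → Bool, π z * ind z k * x z)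
        = α 2 * (ξu - ξbu) + α 1 * ξbu :=
  stmt18_general d ψ π hπ ind hind α hα j k hjk ξu ξbu x hx
end
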